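/- arXiv:0903.3812 — 2 statements merged into one kernel-verified Lean document; each statement's English description precedes it below -/
import Mathlib

section
/- Let q ≥ 4 and let G be a graph of minimum order among all graphs H with clique number cl(H) < q−1 and chromatic number χ(H) ≥ r+1. Then F_v(2_r; q−1) ≥ F_v(2_r; q) + α(G) − 1, where α(G) is the independence number of G. -/
/-- The chromatic number of `G` as a natural number. -/
noncomputable def chi {V : Type*} (G : SimpleGraph V) : ℕ := G.chromaticNumber.toNat

/-- The independence number of `G`: the clique number of the complement. -/
noncomputable def indepNum {V : Type*} (G : SimpleGraph V) : ℕ := Gᶜ.cliqueNum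

/-- The vertex Folkman number `F_v(2_r; q)`: the minimum number of vertices of a
graph with clique number `< q` and chromatic number `≥ r + 1`. -/
noncomputable def Fv (r q : ℕ) : ℕ :=
  sInf {n | ∃ G : SimpleGraph (Fin n), G.cliqueNum < q ∧ r + 1 ≤ chi G}

/-- The Ramsey number `R(p, 3)`: the least `n` such that every graph on at least `n`
vertices contains a `p`-clique or an independent set of size `3`. -/
noncomputable def RamseyTri (p : ℕ) : ℕ :=
  sInf {n | ∀ m, n ≤ m → ∀ G : SimpleGraph (Fin m),
    (∃ S : Finset (Fin m), G.IsNClique p S) ∨ (∃ S : Finset (Fin m), Gᶜ.IsNClique 3 S)}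

/-!
Take a maximum independent set `I` of `G`. Deleting `I` and adding one new vertex adjacent to
everything left raises the clique number by at most one, so the result has no `q`-clique. Every
proper colouring of it yields one of `G`, by giving all of `I` the colour of the new vertex; hence
its chromatic number is still `≥ r + 1`. It has `|V| - α(G) + 1` vertices, which therefore bounds
`F_v(2_r; q)`.
-/

namespace SimpleGraph

variable {V W : Type*}

def cone (H : SimpleGraph W) : SimpleGraph (Option W) where
  Adj
    | some a, some b => H.Adj a b
    | none, none => False
    | _, _ => True
  symm := ⟨by rintro (_ | a) (_ | b) h <;> first | trivial | exact H.adj_symm h⟩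
  loopless := ⟨by rintro (_ | a) h; exacts [h, H.irrefl h]⟩

@[simp] lemma cone_adj_some_some {H : SimpleGraph W} {a b : W} :
    (cone H).Adj (some a) (some b) ↔ H.Adj a b := Iff.rfl

@[simp] lemma cone_adj_none_some {H : SimpleGraph W} {a : W} : (cone H).Adj none (some a) :=
  trivial

@[simp] lemma cone_adj_some_none {H : SimpleGraph W} {a : W} : (cone H).Adj (some a) none :=
  trivial

lemma cliqueNum_cone_le [Finite W] (H : SimpleGraph W) :
    (cone H).cliqueNum ≤ H.cliqueNum + 1 := by
  classical
  obtain ⟨t, ht⟩ := (cone H).exists_isNClique_cliqueNum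
  have hclique : H.IsClique (Finset.eraseNone t : Set W) := by
    intro a ha b hb hab
    exact ht.isClique (Finset.mem_eraseNone.1 ha) (Finset.mem_eraseNone.1 hb) (by simpa)
  calc (cone H).cliqueNum = t.card := ht.card_eq.symm
    _ ≤ (insert none t).card := Finset.card_le_card (Finset.subset_insert _ _)
    _ = (Finset.eraseNone t).card + 1 := by
      rw [← Finset.insertNone_eraseNone, Finset.card_insertNone]
    _ ≤ H.cliqueNum + 1 := by
      gcongr
      exact hclique.card_le_cliqueNum

lemma Embedding.cliqueNum_le [Finite W] {G : SimpleGraph V} {H : SimpleGraph W} (f : G ↪g H) :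
    G.cliqueNum ≤ H.cliqueNum := by
  classical
  obtain ⟨s, hs⟩ := G.exists_isNClique_cliqueNum
  have hclique : H.IsClique (s.map f.toEmbedding : Set W) := by
    rw [Finset.coe_map]
    rintro _ ⟨a, ha, rfl⟩ _ ⟨b, hb, rfl⟩ hab
    exact f.map_adj_iff.2 (hs.isClique ha hb (ne_of_apply_ne _ hab))
  calc G.cliqueNum = (s.map f.toEmbedding).card := by rw [Finset.card_map, hs.card_eq]
    _ ≤ H.cliqueNum := hclique.card_le_cliqueNum

def homConeOfIsIndepSet {G : SimpleGraph V} {s : Set V} [DecidablePred (· ∈ s)]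
    (hs : G.IsIndepSet s) : G →g cone (G.induce sᶜ) where
  toFun v := if h : v ∈ s then none else some ⟨v, h⟩
  map_rel' {v w} hvw := by
    by_cases hv : v ∈ s <;> by_cases hw : w ∈ s
    · exact (hs hv hw (G.ne_of_adj hvw) hvw).elim
    all_goals simp [hv, hw, hvw]

end SimpleGraph

lemma chi_le_of_hom {V W : Type*} [Fintype W] {G : SimpleGraph V} {H : SimpleGraph W}
    (f : G →g H) : chi G ≤ chi H :=
  ENat.toNat_le_toNat (SimpleGraph.chromaticNumber_mono_of_hom f)
    (H.chromaticNumber_le_card.trans_lt (ENat.natCast_lt_top _)).ne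

lemma Fv_le_card {W : Type*} [Fintype W] {r q : ℕ} {H : SimpleGraph W}
    (hcl : H.cliqueNum < q) (hchi : r + 1 ≤ chi H) : Fv r q ≤ Fintype.card W := by
  let e := SimpleGraph.Iso.map (Fintype.equivFin W) H
  refine Nat.sInf_le
    ⟨_, (SimpleGraph.Embedding.cliqueNum_le e.symm.toEmbedding).trans_lt hcl, ?_⟩
  rwa [chi, ← SimpleGraph.chromaticNumber_congr e]

theorem stmt5_general {V : Type*} [Fintype V] (r q : ℕ) (G : SimpleGraph V)
    (hcl : G.cliqueNum < q - 1) (hchi : r + 1 ≤ chi G)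
    (hmin : Fintype.card V = Fv r (q - 1)) :
    Fv r q + indepNum G - 1 ≤ Fv r (q - 1) := by
  classical
  obtain ⟨I, hI⟩ := G.exists_isNIndepSet_indepNum
  set H := SimpleGraph.cone (G.induce (I : Set V)ᶜ)
  have hHcl : H.cliqueNum < q :=
    (SimpleGraph.cliqueNum_cone_le _).trans_lt
      (by have := G.cliqueNum_induce_le (I : Set V)ᶜ; omega)
  have hHchi : r + 1 ≤ chi H :=
    hchi.trans (chi_le_of_hom (SimpleGraph.homConeOfIsIndepSet hI.isIndepSet))
  have hHcard : Fintype.card (Option ↥(I : Set V)ᶜ) = Fintype.card V - I.card + 1 := by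
    rw [Fintype.card_option, Fintype.card_compl_set]
    simp
  have hFv := Fv_le_card hHcl hHchi
  have hIle := I.card_le_univ
  rw [indepNum, SimpleGraph.cliqueNum_compl, ← hI.card_eq, ← hmin]
  omega

theorem stmt5 {V : Type*} [Fintype V] (r q : ℕ) (hq : 4 ≤ q) (G : SimpleGraph V)
    (hcl : G.cliqueNum < q - 1) (hchi : r + 1 ≤ chi G)
    (hmin : Fintype.card V = Fv r (q - 1)) :
    Fv r q + indepNum G - 1 ≤ Fv r (q - 1) :=
  stmt5_general r q G hcl hchi hmin
end

section
/- Let r, q be integers with 4 ≤ q < r+3. Then F_v(2_r; q−1) ≥ F_v(2_r; q) + 1. -/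
/-!
An extremal graph `G` for `F_v(2_r; q - 1)` satisfies `ω(G) < q - 1 ≤ r + 1 < χ(G)`, so it is
not complete. Identifying two nonadjacent vertices gives a graph on one vertex fewer whose
clique number grows by at most one and whose colourings lift back to `G`, so its chromatic
number is still `> r`. Extremal graphs exist because the shift graph on pairs from a
`(2 ^ r + 1)`-set is triangle-free and not `r`-colourable; without them `Fv` would be the junk
value `sInf ∅ = 0`.
-/

open Finset Function

namespace SimpleGraph

variable {V W : Type*} {G : SimpleGraph V}

theorem IsClique.not_cliqueFree_of_le_card {s : Finset V} {n : ℕ} (hs : G.IsClique s)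
    (hn : n ≤ #s) : ¬G.CliqueFree n := by
  obtain ⟨t, hts, rfl⟩ := exists_subset_card_eq hn
  exact IsNClique.not_cliqueFree ⟨hs.subset (coe_subset.2 hts), rfl⟩

theorem cliqueNum_lt_iff_cliqueFree [Finite V] {n : ℕ} : G.cliqueNum < n ↔ G.CliqueFree n := by
  refine ⟨fun h s hs => ?_, fun h => ?_⟩
  · have := hs.isClique.card_le_cliqueNum
    rw [hs.card_eq] at this
    omega
  · by_contra! hle
    obtain ⟨s, hs⟩ := G.exists_isNClique_cliqueNum
    exact hs.isClique.not_cliqueFree_of_le_card (hs.card_eq ▸ hle) h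

theorem succ_le_chi_iff_not_colorable [Fintype V] {r : ℕ} :
    r + 1 ≤ chi G ↔ ¬G.Colorable r := by
  have hfin : (chi G : ℕ∞) = G.chromaticNumber := ENat.natCast_toNat_eq_self.2 <|
    chromaticNumber_ne_top_iff_exists.2 ⟨_, G.colorable_of_fintype⟩
  rw [← chromaticNumber_le_iff_colorable, ← hfin, Nat.cast_le]
  omega

theorem exists_ne_not_adj_of_cliqueFree_of_not_colorable [Fintype V] {q r : ℕ}
    (hq : G.CliqueFree q) (hr : ¬G.Colorable r) (hqr : q ≤ r + 1) :
    ∃ u v, u ≠ v ∧ ¬G.Adj u v := by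
  by_contra! hadj
  have hcard : r < Fintype.card V := by
    by_contra! h
    exact hr (G.colorable_of_fintype.mono h)
  refine (show G.IsClique (univ : Finset V) from fun a _ b _ hab => hadj a b hab)
    |>.not_cliqueFree_of_le_card ?_ hq
  rw [card_univ]
  omega

section Identification

variable {f : V → W} {u v : V}

theorem Colorable.of_map (hf : ∀ x y, f x = f y → x = y ∨ s(x, y) = s(u, v))
    (huv : ¬G.Adj u v) {k : ℕ} (h : (G.map f).Colorable k) : G.Colorable k :=
  h.of_hom <| Hom.map f G fun {x y} hxy hfxy => by
    rcases hf x y hfxy with rfl | he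
    · exact hxy.ne rfl
    · exact huv (by rwa [← mem_edgeSet, ← he])

theorem CliqueFree.map_succ (hf : ∀ x y, f x = f y → x = y ∨ s(x, y) = s(u, v))
    (hsurj : Surjective f) {n : ℕ} (h : G.CliqueFree n) : (G.map f).CliqueFree (n + 1) := by
  classical
  intro s hs
  set g := surjInv hsurj
  -- away from the merged vertex `f u`, `f` has a unique preimage, which is `g`
  have hg : ∀ x, f x ≠ f u → x = g (f x) := by
    intro x hx
    rcases hf x (g (f x)) (surjInv_eq hsurj _).symm with h | h
    · exact h
    · rcases Sym2.eq_iff.1 h with ⟨rfl, -⟩ | ⟨rfl, hgu⟩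
      · exact absurd rfl hx
      · exact absurd (by rw [← surjInv_eq hsurj (f x), ← hgu]) hx
  have hclique : G.IsClique ((s.erase (f u)).image g : Set V) := by
    intro x hx y hy hxy
    obtain ⟨a, ha, rfl⟩ := mem_image.1 hx
    obtain ⟨b, hb, rfl⟩ := mem_image.1 hy
    obtain ⟨-, x, y, hadj, rfl, rfl⟩ := hs.isClique (mem_of_mem_erase ha) (mem_of_mem_erase hb)
      (fun hab => hxy (congrArg g hab))
    rwa [← hg x (ne_of_mem_erase ha), ← hg y (ne_of_mem_erase hb)]
  refine hclique.not_cliqueFree_of_le_card ?_ h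
  have := pred_card_le_card_erase (a := f u) (s := s)
  rw [card_image_of_injective _ (injective_surjInv hsurj), hs.card_eq] at *
  omega

end Identification

theorem exists_surjective_fin_identifying [Fintype V] {m : ℕ} (hV : Fintype.card V = m + 1)
    {u v : V} (huv : u ≠ v) :
    ∃ f : V → Fin m, Surjective f ∧ ∀ x y, f x = f y → x = y ∨ s(x, y) = s(u, v) := by
  classical
  let e : {x // x ≠ v} ≃ Fin m :=
    Fintype.equivFinOfCardEq (by simp [Fintype.card_subtype_compl, hV])
  refine ⟨fun x => e (if h : x = v then ⟨u, huv⟩ else ⟨x, h⟩),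
    fun i => ⟨e.symm i, ?_⟩, ?_⟩
  · simp [(e.symm i).2]
  · intro x y hxy
    have := e.injective hxy
    by_cases hx : x = v <;> by_cases hy : y = v <;> simp_all [Subtype.ext_iff, Sym2.eq_swap]

theorem exists_fin_cliqueFree_not_colorable [Fintype V] {q r : ℕ} (hq : G.CliqueFree q)
    (hr : ¬G.Colorable r) :
    ∃ H : SimpleGraph (Fin (Fintype.card V)), H.CliqueFree q ∧ ¬H.Colorable r :=
  let e := G.overFinIso rfl
  ⟨_, hq.comap e.isContained', fun h => hr ((colorable_congr e).2 h)⟩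

def shiftGraph (N : ℕ) : SimpleGraph {p : Fin N × Fin N // p.1 < p.2} :=
  fromRel fun p q => p.1.2 = q.1.1

theorem shiftGraph_cliqueFree_three (N : ℕ) : (shiftGraph N).CliqueFree 3 := by
  intro s hs
  obtain ⟨⟨⟨a₁, a₂⟩, ha⟩, ⟨⟨b₁, b₂⟩, hb⟩, ⟨⟨c₁, c₂⟩, hc⟩, hab, hac, hbc, -⟩ :=
    is3Clique_iff.1 hs
  simp only [shiftGraph, fromRel_adj, Fin.ext_iff, Fin.lt_def] at ha hb hc hab hac hbc
  omega

/-- A colour `c` used on `(i, j)` cannot be used on any pair `(j, k)`, so the sets of colours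
used on pairs starting at `i` are pairwise distinct. -/
theorem shiftGraph_not_colorable {N r : ℕ} (h : 2 ^ r < N) : ¬(shiftGraph N).Colorable r := by
  classical
  rintro ⟨C⟩
  let S : Fin N → Finset (Fin r) := fun i => (univ.filter fun p => p.1.1 = i).image C
  obtain ⟨i, j, hij, hS⟩ := Fintype.exists_ne_map_eq_of_card_lt S (by simpa using h)
  wlog hlt : i < j generalizing i j
  · exact this j i hij.symm hS.symm (lt_of_le_of_ne (not_lt.1 hlt) hij.symm)
  have hij_mem : C ⟨(i, j), hlt⟩ ∈ S j := hS ▸ mem_image_of_mem C (by simp)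
  obtain ⟨p, hp, hpc⟩ := mem_image.1 hij_mem
  have hpj : p.1.1 = j := (mem_filter.1 hp).2
  refine C.valid ?_ hpc.symm
  exact (fromRel_adj _ _ _).2 ⟨fun h => hij (by rw [← hpj, ← h]), Or.inl hpj.symm⟩

end SimpleGraph

open SimpleGraph

theorem Fv_eq_sInf_cliqueFree_not_colorable (r q : ℕ) :
    Fv r q = sInf {n | ∃ G : SimpleGraph (Fin n), G.CliqueFree q ∧ ¬G.Colorable r} := by
  simp only [Fv, cliqueNum_lt_iff_cliqueFree, succ_le_chi_iff_not_colorable]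

theorem Fv_le_card_s6 {V : Type*} [Fintype V] {G : SimpleGraph V} {q r : ℕ} (hq : G.CliqueFree q)
    (hr : ¬G.Colorable r) : Fv r q ≤ Fintype.card V := by
  rw [Fv_eq_sInf_cliqueFree_not_colorable]
  exact Nat.sInf_le (exists_fin_cliqueFree_not_colorable hq hr)

theorem exists_fin_Fv_cliqueFree_not_colorable {q : ℕ} (r : ℕ) (hq : 3 ≤ q) :
    ∃ G : SimpleGraph (Fin (Fv r q)), G.CliqueFree q ∧ ¬G.Colorable r := by
  rw [Fv_eq_sInf_cliqueFree_not_colorable]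
  have hshift := exists_fin_cliqueFree_not_colorable ((shiftGraph_cliqueFree_three _).mono hq)
    (shiftGraph_not_colorable (Nat.lt_succ_self (2 ^ r)))
  exact Nat.sInf_mem
    (s := {n | ∃ G : SimpleGraph (Fin n), G.CliqueFree q ∧ ¬G.Colorable r}) ⟨_, hshift⟩

theorem stmt6 (r q : ℕ) (hq : 4 ≤ q) (hqr : q < r + 3) :
    Fv r q + 1 ≤ Fv r (q - 1) := by
  obtain ⟨G, hGq, hGr⟩ := exists_fin_Fv_cliqueFree_not_colorable r (q := q - 1) (by omega)
  obtain ⟨u, v, huv, hnadj⟩ :=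
    exists_ne_not_adj_of_cliqueFree_of_not_colorable hGq hGr (by omega)
  have hcard : Fintype.card (Fin (Fv r (q - 1))) = Fv r (q - 1) - 1 + 1 :=
    (Fintype.card_fin _).trans (Nat.sub_add_cancel u.pos).symm
  obtain ⟨f, hsurj, hf⟩ := exists_surjective_fin_identifying hcard huv
  have hmap : (G.map f).CliqueFree q := by
    simpa only [Nat.sub_add_cancel (by omega : 1 ≤ q)] using hGq.map_succ hf hsurj
  have hle := Fv_le_card_s6 hmap (fun h => hGr (h.of_map hf hnadj))
  rw [Fintype.card_fin] at hle
  have := u.pos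
  omega
end
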